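/- arXiv:1712.01583 — 8 statements merged into one kernel-verified Lean document; each statement's English description precedes it below -/
import Mathlib

section
/- Let Γ be a finite simple graph and let A_Γ be the associated right-angled Artin group. For a full subgraph Δ of Γ, the center of the special subgroup A_Δ equals A_{Z(Δ)}, where Z(Δ) is the full subgraph of Δ consisting of those vertices of Δ adjacent to every other vertex of Δ. -/
/-! Basic definitions: right-angled Artin groups, special subgroups,
relative automorphism notions, and graph-theoretic notions from
Day–Wade, "Relative automorphism groups of right-angled Artin groups". -/

namespace RAAGPaper

open scoped commutatorElement

variable {V : Type}

/-- The commutator relations defining the RAAG on a simple graph. -/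
def raagRels (G : SimpleGraph V) : Set (FreeGroup V) :=
  {r | ∃ v w : V, G.Adj v w ∧ r = ⁅FreeGroup.of v, FreeGroup.of w⁆}

/-- The right-angled Artin group on the graph `G`. -/
abbrev RAAG (G : SimpleGraph V) : Type := PresentedGroup (raagRels G)

/-- The generator of `RAAG G` corresponding to a vertex. -/
def gen (G : SimpleGraph V) (v : V) : RAAG G := PresentedGroup.of v

/-- The special subgroup `A_Δ` generated by the vertices of a (full) subgraph `Δ`. -/
def sp (G : SimpleGraph V) (Δ : Set V) : Subgroup (RAAG G) :=
  Subgroup.closure (gen G '' Δ)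

/-- The link of a vertex. -/
def lk (G : SimpleGraph V) (v : V) : Set V := {w | G.Adj v w}

/-- The star of a vertex. -/
def st (G : SimpleGraph V) (v : V) : Set V := insert v (lk G v)

/-- The standard (domination) order: `u ≤ v` iff `lk(u) ⊆ st(v)`. -/
def stdLE (G : SimpleGraph V) (u v : V) : Prop := lk G u ⊆ st G v

/-- An automorphism acts trivially on a subgroup if it agrees with an inner
automorphism on that subgroup. -/
def ActsTrivially {A : Type*} [Group A] (φ : MulAut A) (H : Subgroup A) : Prop :=
  ∃ g : A, ∀ h ∈ H, φ h = g * h * g⁻¹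

/-- An automorphism preserves a subgroup if it sends it to a conjugate of itself. -/
def Preserves {A : Type*} [Group A] (φ : MulAut A) (H : Subgroup A) : Prop :=
  ∃ g : A, Subgroup.map φ.toMonoidHom H = Subgroup.map (MulAut.conj g).toMonoidHom H

/-- `𝒢`-adjacency: adjacent in `G` or contained in a common member of `𝒢`. -/
def gAdj (G : SimpleGraph V) (calG : Set (Set V)) (u w : V) : Prop :=
  G.Adj u w ∨ ∃ Δ ∈ calG, u ∈ Δ ∧ w ∈ Δ

/-- `𝒢`-reachability within a set `S` of vertices. -/
def gReach (G : SimpleGraph V) (calG : Set (Set V)) (S : Set V) : V → V → Prop :=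
  Relation.ReflTransGen (fun a b => a ∈ S ∧ b ∈ S ∧ gAdj G calG a b)

/-- `K` is a union of `𝒢`-components of (the full subgraph on) `S`.
With `calG = ∅` this says `K` is a union of connected components of `S`. -/
def UnionOfComps (G : SimpleGraph V) (calG : Set (Set V)) (S K : Set V) : Prop :=
  K ⊆ S ∧ ∀ u ∈ K, ∀ w, gReach G calG S u w → w ∈ K

/-- The members of `𝒢` not containing the vertex `x`. -/
def calGx (calG : Set (Set V)) (x : V) : Set (Set V) := {Δ ∈ calG | x ∉ Δ}

/-- The `𝒢`-order: `u ≤_𝒢 v` iff `u ≤ v` in the standard order and every member of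
`𝒢` containing `u` also contains `v`. -/
def gLE (G : SimpleGraph V) (calG : Set (Set V)) (u v : V) : Prop :=
  stdLE G u v ∧ ∀ Δ ∈ calG, u ∈ Δ → v ∈ Δ

/-- `Δ` meets at most one `𝒢^x`-component of `Γ - st(x)`. -/
def MeetsAtMostOne (G : SimpleGraph V) (calG : Set (Set V)) (x : V) (Δ : Set V) : Prop :=
  ∀ u w, u ∈ Δ → w ∈ Δ → u ∈ (st G x)ᶜ → w ∈ (st G x)ᶜ →
    gReach G (calGx calG x) ((st G x)ᶜ) u w

/-- `Δ` is upwards closed under the `𝒢`-order. -/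
def UpClosed (G : SimpleGraph V) (calG : Set (Set V)) (Δ : Set V) : Prop :=
  ∀ v ∈ Δ, ∀ w, gLE G calG v w → w ∈ Δ

/-- `Δ` is not `𝒢`-star-separated by any outside vertex. -/
def NotStarSep (G : SimpleGraph V) (calG : Set (Set V)) (Δ : Set V) : Prop :=
  ∀ x, x ∉ Δ → MeetsAtMostOne G calG x Δ

/-- All members of `calG` are proper (special) subgroups. -/
def Proper (calG : Set (Set V)) : Prop := ∀ Δ ∈ calG, Δ ≠ Set.univ

/-- Word length of an element of the RAAG with respect to the standard generators. -/
noncomputable def wordLength (G : SimpleGraph V) (g : RAAG G) : ℕ :=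
  sInf {n | ∃ l : List (V × Bool), PresentedGroup.mk (raagRels G) (FreeGroup.mk l) = g ∧
    l.length = n}

/-- An element is cyclically reduced if it has minimal word length in its
conjugacy class. -/
noncomputable def CycRed (G : SimpleGraph V) (g : RAAG G) : Prop :=
  ∀ h : RAAG G, wordLength G g ≤ wordLength G (h * g * h⁻¹)

/-- The link of `v` computed inside the full subgraph `Δ`. -/
def lkIn (G : SimpleGraph V) (Δ : Set V) (v : V) : Set V := {w ∈ Δ | G.Adj v w}

/-- The star of `v` computed inside the full subgraph `Δ`. -/
def stIn (G : SimpleGraph V) (Δ : Set V) (v : V) : Set V := insert v (lkIn G Δ v)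

/-- Domination computed inside the full subgraph `Δ`. -/
def leIn (G : SimpleGraph V) (Δ : Set V) (u v : V) : Prop :=
  lkIn G Δ u ⊆ stIn G Δ v

/-- The induced peripheral structure `𝒢_Δ`: proper intersections of members of `𝒢`
with `Δ`. -/
def inducedG (calG : Set (Set V)) (Δ : Set V) : Set (Set V) :=
  {Θ | ∃ Λ ∈ calG, Θ = Δ ∩ Λ ∧ Δ ∩ Λ ≠ Δ}

/-- `𝒢` is saturated: it contains every proper special subgroup invariant under
`Out⁰(A_Γ; 𝒢)`, where invariance is characterized by being upwards closed under
`≤_𝒢` and not `𝒢`-star-separated by an outside vertex. -/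
def Saturated (G : SimpleGraph V) (calG : Set (Set V)) : Prop :=
  ∀ Δ : Set V, Δ ≠ Set.univ → UpClosed G calG Δ → NotStarSep G calG Δ → Δ ∈ calG

/-- `φ` is an inversion automorphism. -/
def IsInversion (G : SimpleGraph V) (φ : MulAut (RAAG G)) : Prop :=
  ∃ v, φ (gen G v) = (gen G v)⁻¹ ∧ ∀ w, w ≠ v → φ (gen G w) = gen G w

/-- `φ` is a transvection. -/
def IsTransvection (G : SimpleGraph V) (φ : MulAut (RAAG G)) : Prop :=
  ∃ v w, v ≠ w ∧ stdLE G v w ∧ φ (gen G v) = gen G v * gen G w ∧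
    ∀ u, u ≠ v → φ (gen G u) = gen G u

/-- `φ` is an extended partial conjugation. -/
def IsEPC (G : SimpleGraph V) (φ : MulAut (RAAG G)) : Prop :=
  ∃ x K, UnionOfComps G ∅ ((st G x)ᶜ) K ∧
    (∀ w ∈ K, φ (gen G w) = gen G x * gen G w * (gen G x)⁻¹) ∧
    ∀ w ∉ K, φ (gen G w) = gen G w

/-- The subgroup `Aut⁰(A_Γ)` generated by inversions, transvections and extended
partial conjugations. -/
def Aut0 (G : SimpleGraph V) : Subgroup (MulAut (RAAG G)) :=
  Subgroup.closure {φ | IsInversion G φ ∨ IsTransvection G φ ∨ IsEPC G φ}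

end RAAGPaper

/-!
The heart of the proof is that the centralizer of a generator `w` lies in `A_{st w}`. For a vertex
`v ∉ st w`, `A_Γ` is the amalgam `A_{Γ - v} *_{A_{lk v}} A_{st v}`. The generator `w` lies in the
first factor and, since its exponent sum is invariant under conjugation and vanishes on
`A_{lk v}`, none of its conjugates in that factor lies in `A_{lk v}`; the normal form theorem for
amalgams then forces everything commuting with `w` into `A_{Γ - v}`. Special subgroups intersect
like their vertex sets (retractions `A_Γ → A_S` show this), so intersecting over all such `v` gives
`A_{st w}`, and intersecting over `w ∈ Δ` identifies the center of `A_Δ` with `A_{Z(Δ)}`.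
-/

namespace Monoid

namespace CoprodI.NeWord

variable {ι : Type*} {G : ι → Type*} [∀ i, Group (G i)]

theorem toList_inv {i j : ι} (w : NeWord G i j) :
    w.inv.toList = (w.toList.map fun l => ⟨l.1, l.2⁻¹⟩).reverse := by
  induction w with
  | singleton => rfl
  | append w₁ _ w₂ ih₁ ih₂ => simp [inv, ih₁, ih₂]

end CoprodI.NeWord

namespace PushoutI

open CoprodI

variable {ι : Type*} {G : ι → Type*} [∀ i, Group (G i)] {H : Type*} [Group H]
  {φ : ∀ i, H →* G i}

theorem Reduced.map_fst_eq_of_prod_eq (hφ : ∀ i, Function.Injective (φ i)) {w₁ w₂ : Word G}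
    (h₁ : Reduced φ w₁) (h₂ : Reduced φ w₂)
    (h : ofCoprodI (φ := φ) w₁.prod = ofCoprodI w₂.prod) :
    w₁.toList.map Sigma.fst = w₂.toList.map Sigma.fst := by
  obtain ⟨d⟩ := NormalWord.transversal_nonempty φ hφ
  obtain ⟨n₁, hp₁, hm₁⟩ := h₁.exists_normalWord_prod_eq d
  obtain ⟨n₂, hp₂, hm₂⟩ := h₂.exists_normalWord_prod_eq d
  rw [← hm₁, ← hm₂, NormalWord.prod_injective (hp₁.trans (h.trans hp₂.symm))]

theorem Reduced.neWord_inv {i j : ι} {w : NeWord G i j} (hw : Reduced φ w.toWord) :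
    Reduced φ w.inv.toWord := by
  intro l hl
  change l ∈ w.inv.toList at hl
  rw [NeWord.toList_inv, List.mem_reverse, List.mem_map] at hl
  obtain ⟨l', hl', rfl⟩ := hl
  exact fun h => hw l' hl' (by simpa using inv_mem h)

theorem conj_ne_of_neWord (hφ : ∀ i, Function.Injective (φ i)) {i j k : ι} (t : NeWord G j k)
    (hji : j ≠ i) (ht : Reduced φ t.toWord) {a₁ a₂ : G i} (h₁ : a₁ ∉ (φ i).range)
    (h₂ : a₂ ∉ (φ i).range) :
    (ofCoprodI (φ := φ) t.prod)⁻¹ * of i a₁ * ofCoprodI t.prod ≠ of i a₂ := by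
  intro h
  -- `t⁻¹ a₁ t` is a reduced word of length at least 3 representing the one-letter word `a₂`.
  let u := (t.inv.append hji (.singleton a₁ (by rintro rfl; exact h₁ (one_mem _)))).append
    hji.symm t
  let s := NeWord.singleton a₂ (by rintro rfl; exact h₂ (one_mem _))
  have hu : Reduced φ u.toWord := by
    intro l hl
    simp only [u, NeWord.toWord, NeWord.toList, List.mem_append, List.mem_singleton] at hl
    rcases hl with (hl | rfl) | hl
    · exact ht.neWord_inv l hl
    · exact h₁
    · exact ht l hl
  have hs : Reduced φ s.toWord := by
    intro l hl
    simp only [s, NeWord.toWord, NeWord.toList, List.mem_singleton] at hl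
    exact hl ▸ h₂
  have hlen := congrArg List.length <| hu.map_fst_eq_of_prod_eq hφ hs <| by
    change ofCoprodI u.prod = ofCoprodI s.prod
    simpa [u, s] using h
  have := List.length_pos_iff.2 t.toList_ne_nil
  simp only [u, s, NeWord.toWord, NeWord.toList, List.map_append, List.map_cons, List.map_nil,
    List.length_append, List.length_map, List.length_cons, List.length_nil] at hlen
  omega

theorem exists_eq_of_mul_ofCoprodI (hφ : ∀ i, Function.Injective (φ i)) (i : ι)
    (z : PushoutI φ) : ∃ (g : G i) (w : Word G), Reduced φ w ∧ w.fstIdx ≠ some i ∧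
      z = of i g * ofCoprodI w.prod := by
  classical
  obtain ⟨d⟩ := NormalWord.transversal_nonempty φ hφ
  set n : NormalWord d := z • NormalWord.empty
  have hn : Reduced φ n.toWord := by
    rintro ⟨j, g⟩ hg hgr
    have hset := n.normalized j g hg
    refine n.ne_one _ hg ?_
    rw [← ((d.compl j).equiv_snd_eq_self_iff_mem (one_mem _)).2 hset]
    exact ((d.compl j).coe_equiv_snd_eq_one_iff_mem (d.one_mem j)).2 hgr
  set p := Word.equivPair i n.toWord
  refine ⟨φ i n.head * p.head, p.tail, fun l hl => hn l ?_, p.fstIdx_ne, ?_⟩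
  · exact Word.mem_of_mem_equivPair_tail _ hl
  · have hz : z = n.prod := by simp [n]
    rw [hz, NormalWord.prod, ← (Word.equivPair i).symm_apply_apply n.toWord, Word.equivPair_symm,
      Word.prod_rcons, map_mul, ofCoprodI_of, ← of_apply_eq_base φ i, map_mul, mul_assoc]

theorem mem_range_of_of_commute (hφ : ∀ i, Function.Injective (φ i)) {i : ι} {a : G i}
    (ha : ∀ c, c⁻¹ * a * c ∉ (φ i).range) {z : PushoutI φ} (hz : Commute z (of i a)) :
    z ∈ (of i).range := by
  obtain ⟨g, w, hw, hwi, rfl⟩ := exists_eq_of_mul_ofCoprodI hφ i z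
  by_cases hw₀ : w = .empty
  · subst hw₀
    exact ⟨g, by simp⟩
  obtain ⟨j, k, t, rfl⟩ := NeWord.of_word w hw₀
  have hji : j ≠ i := by
    rintro rfl
    exact hwi (by simp [Word.fstIdx, NeWord.toWord])
  refine absurd ?_ (conj_ne_of_neWord hφ t hji hw (ha g) (by simpa using ha 1))
  set T := ofCoprodI (φ := φ) t.prod
  change Commute (of i g * T) _ at hz
  calc T⁻¹ * of i (g⁻¹ * a * g) * T = (of i g * T)⁻¹ * of i a * (of i g * T) := by
        simp only [map_mul, map_inv]; group
    _ = of i a := by rw [mul_assoc, ← hz.eq, inv_mul_cancel_left]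

end PushoutI
end Monoid

theorem Subgroup.map_subtype_center {K : Type*} [Group K] (H : Subgroup K) :
    (Subgroup.center H).map H.subtype = H ⊓ Subgroup.centralizer H := by
  ext x
  constructor
  · rintro ⟨y, hy, rfl⟩
    exact ⟨y.2, fun g hg => congrArg Subtype.val (Subgroup.mem_center_iff.1 hy ⟨g, hg⟩)⟩
  · rintro ⟨hxH, hx⟩
    exact ⟨⟨x, hxH⟩, Subgroup.mem_center_iff.2 fun g => Subtype.ext (hx g g.2), rfl⟩

namespace RAAGPaper

open scoped commutatorElement

variable {V : Type} {G : SimpleGraph V}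

theorem gen_commute_of_adj {v w : V} (h : G.Adj v w) : Commute (gen G v) (gen G w) := by
  refine commutatorElement_eq_one_iff_commute.1 ?_
  change ⁅PresentedGroup.mk _ (FreeGroup.of v), PresentedGroup.mk _ (FreeGroup.of w)⁆ = 1
  rw [← map_commutatorElement]
  exact (QuotientGroup.eq_one_iff _).2 (Subgroup.subset_normalClosure ⟨v, w, h, rfl⟩)

namespace RAAG

variable {K : Type*} [Group K]

def lift (f : V → K) (hf : ∀ v w, G.Adj v w → Commute (f v) (f w)) : RAAG G →* K :=
  PresentedGroup.toGroup <| by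
    rintro _ ⟨v, w, h, rfl⟩
    rw [map_commutatorElement, FreeGroup.lift_apply_of, FreeGroup.lift_apply_of]
    exact commutatorElement_eq_one_iff_commute.2 (hf v w h)

@[simp]
theorem lift_gen (f : V → K) (hf : ∀ v w, G.Adj v w → Commute (f v) (f w)) (v : V) :
    lift f hf (gen G v) = f v :=
  PresentedGroup.toGroup.of _

theorem hom_ext {φ ψ : RAAG G →* K} (h : ∀ v, φ (gen G v) = ψ (gen G v)) : φ = ψ :=
  PresentedGroup.ext h

end RAAG

theorem gen_mem_sp {S : Set V} {v : V} (h : v ∈ S) : gen G v ∈ sp G S :=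
  Subgroup.subset_closure ⟨v, h, rfl⟩

theorem sp_mono {S T : Set V} (h : S ⊆ T) : sp G S ≤ sp G T :=
  Subgroup.closure_mono (Set.image_mono h)

theorem sp_univ : sp G Set.univ = ⊤ := by
  rw [sp, Set.image_univ]
  exact PresentedGroup.closure_range_of _

theorem sp_le_iff {S : Set V} {H : Subgroup (RAAG G)} : sp G S ≤ H ↔ ∀ v ∈ S, gen G v ∈ H := by
  rw [sp, Subgroup.closure_le, Set.image_subset_iff]
  rfl

open Classical in
noncomputable def retraction (S : Set V) : RAAG G →* RAAG G :=
  RAAG.lift (fun v => if v ∈ S then gen G v else 1) fun v w h => by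
    split_ifs <;> simp [gen_commute_of_adj h]

theorem retraction_gen_of_mem {S : Set V} {v : V} (hv : v ∈ S) :
    retraction S (gen G v) = gen G v := by
  simp [retraction, hv]

theorem retraction_gen_of_notMem {S : Set V} {v : V} (hv : v ∉ S) :
    retraction S (gen G v) = 1 := by
  simp [retraction, hv]

theorem sp_le_eqLocus_retraction (S : Set V) :
    sp G S ≤ (retraction S).eqLocus (MonoidHom.id _) :=
  sp_le_iff.2 fun _ hv => retraction_gen_of_mem hv

theorem sp_le_comap_retraction (S T : Set V) :
    sp G T ≤ (sp G (S ∩ T)).comap (retraction S) := by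
  refine sp_le_iff.2 fun v hv => ?_
  by_cases hvS : v ∈ S
  · simpa [retraction_gen_of_mem hvS] using gen_mem_sp (G := G) (S := S ∩ T) ⟨hvS, hv⟩
  · simp [retraction_gen_of_notMem hvS]

theorem mem_sp_inter {S T : Set V} {x : RAAG G} (hS : x ∈ sp G S) (hT : x ∈ sp G T) :
    x ∈ sp G (S ∩ T) := by
  have hfix : retraction S x = x := sp_le_eqLocus_retraction S hS
  simpa [hfix] using sp_le_comap_retraction S T hT

theorem mem_sp_sInter {𝒮 : Set (Set V)} (h𝒮 : 𝒮.Finite) {x : RAAG G}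
    (h : ∀ S ∈ 𝒮, x ∈ sp G S) : x ∈ sp G (⋂₀ 𝒮) := by
  induction 𝒮, h𝒮 using Set.Finite.induction_on with
  | empty => simp [sp_univ]
  | insert _ _ ih =>
    rw [Set.sInter_insert]
    exact mem_sp_inter (h _ (Set.mem_insert _ _)) (ih fun S hS => h S (Set.mem_insert_of_mem _ hS))

theorem mem_sp_iInter {ι : Type*} [Finite ι] {T : ι → Set V} {x : RAAG G}
    (h : ∀ i, x ∈ sp G (T i)) : x ∈ sp G (⋂ i, T i) := by
  rw [← Set.sInter_range]
  exact mem_sp_sInter (Set.finite_range T) (Set.forall_mem_range.2 h)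

open Monoid PushoutI

open Classical in
noncomputable def expSum (w : V) : RAAG G →* Multiplicative ℤ :=
  RAAG.lift (fun v => if v = w then Multiplicative.ofAdd 1 else 1) fun _ _ _ => Commute.all _ _

theorem expSum_gen_self (w : V) : expSum w (gen G w) = Multiplicative.ofAdd 1 := by
  simp [expSum]

theorem sp_le_ker_expSum {S : Set V} {w : V} (hw : w ∉ S) : sp G S ≤ (expSum w).ker :=
  sp_le_iff.2 fun v hv => by
    simp [expSum, show v ≠ w from fun h => hw (h ▸ hv)]

theorem lk_subset_compl_singleton (v : V) : lk G v ⊆ {v}ᶜ :=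
  fun _ h => (show G.Adj v _ from h).ne'

theorem lk_subset_st (v : V) : lk G v ⊆ st G v :=
  Set.subset_insert _ _

variable (G) in
/-- The factors of the splitting `A_Γ = A_{Γ - v} *_{A_{lk v}} A_{st v}`. -/
def splitFactor (v : V) : Bool → Subgroup (RAAG G)
  | true => sp G {v}ᶜ
  | false => sp G (st G v)

theorem sp_lk_le_splitFactor (v : V) : ∀ b, sp G (lk G v) ≤ splitFactor G v b
  | true => sp_mono (lk_subset_compl_singleton v)
  | false => sp_mono (lk_subset_st v)

variable (G) in
abbrev splitIncl (v : V) (b : Bool) : sp G (lk G v) →* splitFactor G v b :=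
  Subgroup.inclusion (sp_lk_le_splitFactor v b)

theorem splitIncl_injective (v : V) (b : Bool) : Function.Injective (splitIncl G v b) :=
  Subgroup.inclusion_injective _

variable (G) in
def splitProj (v : V) : PushoutI (splitIncl G v) →* RAAG G :=
  PushoutI.lift (fun b => (splitFactor G v b).subtype) (sp G (lk G v)).subtype fun _ =>
    Subgroup.subtype_comp_inclusion _

open Classical in
variable (G) in
noncomputable def splitGen (v u : V) : PushoutI (splitIncl G v) :=
  if hu : u = v then of false (⟨gen G u, gen_mem_sp (hu ▸ Set.mem_insert u _)⟩ : sp G (st G v))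
  else of true (⟨gen G u, gen_mem_sp hu⟩ : sp G {v}ᶜ)

theorem splitGen_of_ne {v u : V} (hu : u ≠ v) :
    splitGen G v u = of true ⟨gen G u, gen_mem_sp hu⟩ :=
  dif_neg hu

theorem splitGen_of_mem_st {v u : V} (hu : u ∈ st G v) :
    splitGen G v u = of false ⟨gen G u, gen_mem_sp hu⟩ := by
  by_cases huv : u = v
  · exact dif_pos huv
  · have hlk : u ∈ lk G v := hu.resolve_left huv
    rw [splitGen_of_ne huv]
    let y : sp G (lk G v) := ⟨gen G u, gen_mem_sp hlk⟩
    exact (of_apply_eq_base _ true y).trans (of_apply_eq_base _ false y).symm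

theorem commute_gen_sp_of_adj {S : Set V} {u w : V} (hu : u ∈ S) (hw : w ∈ S) (h : G.Adj u w) :
    Commute (⟨gen G u, gen_mem_sp hu⟩ : sp G S) ⟨gen G w, gen_mem_sp hw⟩ :=
  Subtype.ext (gen_commute_of_adj h)

variable (G) in
noncomputable def splitSection (v : V) : RAAG G →* PushoutI (splitIncl G v) :=
  RAAG.lift (splitGen G v) fun x y h => by
    by_cases hst : x = v ∨ y = v
    · have hx : x ∈ st G v := by
        rcases hst with rfl | rfl
        exacts [Set.mem_insert x _, Set.mem_insert_of_mem _ h.symm]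
      have hy : y ∈ st G v := by
        rcases hst with rfl | rfl
        exacts [Set.mem_insert_of_mem _ h, Set.mem_insert y _]
      rw [splitGen_of_mem_st hx, splitGen_of_mem_st hy]
      exact (commute_gen_sp_of_adj hx hy h).map _
    · push Not at hst
      rw [splitGen_of_ne hst.1, splitGen_of_ne hst.2]
      exact (commute_gen_sp_of_adj hst.1 hst.2 h).map _

theorem splitProj_splitSection (v : V) (x : RAAG G) : splitProj G v (splitSection G v x) = x := by
  suffices (splitProj G v).comp (splitSection G v) = MonoidHom.id _ from DFunLike.congr_fun this x
  refine RAAG.hom_ext fun u => ?_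
  by_cases hu : u = v
  · simp [splitSection, splitGen_of_mem_st (hu ▸ Set.mem_insert u _ : u ∈ st G v), splitProj]
  · simp [splitSection, splitGen_of_ne hu, splitProj]

theorem mem_sp_compl_singleton_of_commute {v w : V} (hvw : v ∉ st G w) {z : RAAG G}
    (hz : Commute z (gen G w)) : z ∈ sp G {v}ᶜ := by
  have hwv : w ≠ v := fun h => hvw (h ▸ Set.mem_insert w _)
  set a : splitFactor G v true := ⟨gen G w, gen_mem_sp hwv⟩
  have ha : ∀ c, c⁻¹ * a * c ∉ (splitIncl G v true).range := by
    rintro c ⟨y, hy⟩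
    have hw : w ∉ lk G v := fun h => hvw (Set.mem_insert_of_mem _ (show G.Adj w v from h.symm))
    have hconj : expSum w ((c⁻¹ * a * c : splitFactor G v true) : RAAG G) =
        Multiplicative.ofAdd 1 := by
      simp [a, expSum_gen_self]
    rw [← hy, Subgroup.coe_inclusion, show expSum w (y : RAAG G) = 1 from sp_le_ker_expSum hw y.2] at hconj
    exact one_ne_zero (ofAdd_eq_one.1 hconj.symm)
  have hsec : Commute (splitSection G v z) (of true a) := by
    simpa [splitSection, splitGen_of_ne hwv] using hz.map (splitSection G v)
  obtain ⟨y, hy⟩ := mem_range_of_of_commute (splitIncl_injective v) ha hsec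
  rw [← splitProj_splitSection v z, ← hy]
  simp only [splitProj, lift_of]
  exact y.2

theorem mem_sp_st_of_commute [Finite V] {w : V} {z : RAAG G} (hz : Commute z (gen G w)) :
    z ∈ sp G (st G w) := by
  have hst : st G w = ⋂ v : ↥(st G w)ᶜ, {(v : V)}ᶜ := by
    ext
    simp [imp_not_comm]
  rw [hst]
  exact mem_sp_iInter fun v => mem_sp_compl_singleton_of_commute v.2 hz

theorem centralizer_sp (S : Set V) :
    Subgroup.centralizer (sp G S : Set (RAAG G)) = Subgroup.centralizer (gen G '' S) :=
  Subgroup.centralizer_closure _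

/-- The center of a special subgroup `A_Δ` is `A_{Z(Δ)}`, where
`Z(Δ)` consists of the vertices of `Δ` adjacent to every other vertex of `Δ`. -/
theorem center_special_subgroup [Fintype V] (G : SimpleGraph V) (Δ : Set V) :
    (Subgroup.center ↥(sp G Δ)).map (sp G Δ).subtype =
      sp G {v ∈ Δ | ∀ w ∈ Δ, w ≠ v → G.Adj v w} := by
  rw [Subgroup.map_subtype_center, centralizer_sp]
  refine le_antisymm ?_ (le_inf (sp_mono (Set.sep_subset _ _)) ?_)
  · rintro x ⟨hxΔ, hx⟩
    have hst (w : Δ) : x ∈ sp G (st G w) :=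
      mem_sp_st_of_commute (Subgroup.mem_centralizer_iff.1 hx _ ⟨w, w.2, rfl⟩).symm
    refine sp_mono ?_ (mem_sp_inter hxΔ (mem_sp_iInter hst))
    rintro v ⟨hvΔ, hv⟩
    refine ⟨hvΔ, fun w hw hwv => ?_⟩
    rcases Set.mem_iInter.1 hv ⟨w, hw⟩ with h | h
    exacts [absurd h.symm hwv, h.symm]
  · refine sp_le_iff.2 fun u hu => Subgroup.mem_centralizer_iff.2 ?_
    rintro _ ⟨w, hw, rfl⟩
    obtain rfl | hwu := eq_or_ne w u
    · rfl
    · exact (gen_commute_of_adj (hu.2 w hw hwu)).eq.symm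

end RAAGPaper
end

section
/- Let Γ be a finite simple graph with vertices v, w satisfying lk(v) ⊆ st(w) (so the transvection ρ^w_v sending v to vw is a well-defined automorphism of A_Γ). For a full subgraph Δ of Γ, the automorphism ρ^w_v preserves A_Δ up to conjugacy if and only if v ∉ Δ, or both v and w lie in Δ. -/
/-! Basic definitions: right-angled Artin groups, special subgroups,
relative automorphism notions, and graph-theoretic notions from
Day–Wade, "Relative automorphism groups of right-angled Artin groups". -/

namespace RAAGPaper

variable {V : Type}

open scoped commutatorElement

/-! If `v ∉ Δ`, then `ρ` fixes the generators of `A_Δ`; if `v, w ∈ Δ`, then `ρ` maps them into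
`A_Δ` and `v = ρ(v w⁻¹)` lies in `ρ(A_Δ)`. In both cases `ρ(A_Δ) = A_Δ`. If `v ∈ Δ` but `w ∉ Δ`,
the exponent sum of `w` vanishes on every conjugate of `A_Δ`, but equals `1` on `ρ(v) = v w`. -/

theorem _root_.Subgroup.map_closure_eq_self {A : Type*} [Group A] (φ : A ≃* A) {S : Set A}
    (hmaps : ∀ s ∈ S, φ s ∈ Subgroup.closure S)
    (hhit : ∀ s ∈ S, s ∈ (Subgroup.closure S).map φ.toMonoidHom) :
    (Subgroup.closure S).map φ.toMonoidHom = Subgroup.closure S :=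
  le_antisymm (Subgroup.map_le_iff_le_comap.mpr (Subgroup.closure_le _ |>.mpr hmaps))
    (Subgroup.closure_le _ |>.mpr hhit)

theorem preserves_of_map_eq {A : Type*} [Group A] {φ : MulAut A} {H : Subgroup A}
    (h : H.map φ.toMonoidHom = H) : Preserves φ H :=
  ⟨1, by rw [h, map_one]; exact (Subgroup.map_id H).symm⟩

/-- Conjugation is invisible in an abelian quotient. -/
theorem Preserves.apply_mem_ker {A B : Type*} [Group A] [CommGroup B] {φ : MulAut A}
    {H : Subgroup A} (hP : Preserves φ H) {F : A →* B} (hH : H ≤ F.ker) {h : A} (hh : h ∈ H) :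
    φ h ∈ F.ker := by
  obtain ⟨g, hg⟩ := hP
  obtain ⟨y, hy, hyh⟩ : φ h ∈ H.map (MulAut.conj g).toMonoidHom :=
    hg ▸ Subgroup.mem_map_of_mem _ hh
  rw [← hyh, MonoidHom.mem_ker, MulEquiv.coe_toMonoidHom, MulAut.conj_apply, map_mul, map_mul,
    map_inv, mul_right_comm, mul_inv_cancel, one_mul]
  exact hH hy

noncomputable def exponentSum (G : SimpleGraph V) [DecidableEq V] (w : V) :
    RAAG G →* Multiplicative ℤ :=
  PresentedGroup.toGroup (f := fun u => Multiplicative.ofAdd (if u = w then 1 else 0)) (by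
    rintro _ ⟨a, b, -, rfl⟩
    rw [map_commutatorElement, commutatorElement_eq_one_iff_mul_comm]
    exact mul_comm _ _)

theorem exponentSum_gen (G : SimpleGraph V) [DecidableEq V] (w u : V) :
    exponentSum G w (gen G u) = Multiplicative.ofAdd (if u = w then 1 else 0) :=
  PresentedGroup.toGroup.of _

theorem sp_le_ker_exponentSum (G : SimpleGraph V) [DecidableEq V] {w : V} {Δ : Set V}
    (hw : w ∉ Δ) : sp G Δ ≤ (exponentSum G w).ker := by
  rw [sp, Subgroup.closure_le]
  rintro _ ⟨u, hu, rfl⟩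
  have huw : u ≠ w := fun h => hw (h ▸ hu)
  simp [exponentSum_gen, huw]

section Transvection

variable {G : SimpleGraph V} {v w : V} {ρ : MulAut (RAAG G)}

theorem map_sp_eq_of_transvection (hvw : v ≠ w) (h1 : ρ (gen G v) = gen G v * gen G w)
    (h2 : ∀ u, u ≠ v → ρ (gen G u) = gen G u) {Δ : Set V} (hΔ : v ∈ Δ → w ∈ Δ) :
    (sp G Δ).map ρ.toMonoidHom = sp G Δ := by
  have gen_mem {u : V} (hu : u ∈ Δ) : gen G u ∈ sp G Δ := Subgroup.subset_closure ⟨u, hu, rfl⟩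
  apply Subgroup.map_closure_eq_self
  all_goals rintro _ ⟨u, hu, rfl⟩
  all_goals obtain rfl | huv := eq_or_ne u v
  · rw [h1]
    exact mul_mem (gen_mem hu) (gen_mem (hΔ hu))
  · rw [h2 u huv]
    exact gen_mem hu
  · refine ⟨gen G u * (gen G w)⁻¹, mul_mem (gen_mem hu) (inv_mem (gen_mem (hΔ hu))), ?_⟩
    rw [MulEquiv.coe_toMonoidHom, map_mul, map_inv, h1, h2 w hvw.symm, mul_inv_cancel_right]
  · exact ⟨gen G u, gen_mem hu, h2 u huv⟩

theorem not_preserves_sp_of_transvection (hvw : v ≠ w) (h1 : ρ (gen G v) = gen G v * gen G w)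
    {Δ : Set V} (hv : v ∈ Δ) (hw : w ∉ Δ) : ¬ Preserves ρ (sp G Δ) := by
  classical
  intro hP
  have hker := hP.apply_mem_ker (sp_le_ker_exponentSum G hw) (Subgroup.subset_closure ⟨v, hv, rfl⟩)
  simp [h1, exponentSum_gen, hvw] at hker

end Transvection

theorem transvection_preserves_iff_general (G : SimpleGraph V) (v w : V)
    (hvw : v ≠ w)
    (ρ : MulAut (RAAG G))
    (h1 : ρ (gen G v) = gen G v * gen G w)
    (h2 : ∀ u, u ≠ v → ρ (gen G u) = gen G u)
    (Δ : Set V) :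
    Preserves ρ (sp G Δ) ↔ (v ∉ Δ ∨ (v ∈ Δ ∧ w ∈ Δ)) := by
  have hiff : Preserves ρ (sp G Δ) ↔ (v ∈ Δ → w ∈ Δ) :=
    ⟨fun hP hv => by_contra fun hw => not_preserves_sp_of_transvection hvw h1 hv hw hP,
      fun hΔ => preserves_of_map_eq (map_sp_eq_of_transvection hvw h1 h2 hΔ)⟩
  rw [hiff]
  tauto

/-- The transvection `ρ^w_v` preserves `A_Δ` up to conjugacy iff
`v ∉ Δ` or both `v, w ∈ Δ`. -/
theorem transvection_preserves_iff [Fintype V] (G : SimpleGraph V) (v w : V)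
    (hvw : v ≠ w) (hle : stdLE G v w)
    (ρ : MulAut (RAAG G))
    (h1 : ρ (gen G v) = gen G v * gen G w)
    (h2 : ∀ u, u ≠ v → ρ (gen G u) = gen G u)
    (Δ : Set V) :
    Preserves ρ (sp G Δ) ↔ (v ∉ Δ ∨ (v ∈ Δ ∧ w ∈ Δ)) :=
  transvection_preserves_iff_general G v w hvw ρ h1 h2 Δ

end RAAGPaper
end

section
/- Let Γ be a finite simple graph, x a vertex, and K a union of connected components of Γ − st(x). The extended partial conjugation π^x_K (conjugating each vertex in K by x and fixing all other vertices) acts trivially on a special subgroup A_Δ if and only if K ∩ Δ = ∅ or Δ − st(x) ⊆ K. -/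
/-! Basic definitions: right-angled Artin groups, special subgroups,
relative automorphism notions, and graph-theoretic notions from
Day–Wade, "Relative automorphism groups of right-angled Artin groups". -/

open scoped commutatorElement

namespace RAAGPaper

variable {V : Type}

/-! The forward direction is detected in a finite quotient. If `u ∈ K ∩ Δ` and
`v ∈ Δ - st(x)` lies outside `K`, then `x, u, v` span an independent set, so
`x ↦ (1 2)`, `u ↦ (2 3)`, `v ↦ (0 1)` and all other vertices `↦ 1` defines a homomorphism
`A_Γ → S₄`. A conjugator realising `π^x_K` on `A_Δ` would map to a permutation centralising
`(0 1)` and conjugating `(2 3)` to `(1 3)`; none exists, since it has to preserve `{2, 3}`.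
Conversely, `π^x_K` agrees on `A_Δ` with conjugation by `1` or by `x`, as `x` commutes with `st(x)`. -/

lemma gen_mul_comm_of_adj {G : SimpleGraph V} {a b : V} (h : G.Adj a b) :
    gen G a * gen G b = gen G b * gen G a :=
  commutatorElement_eq_one_iff_mul_comm.1 (PresentedGroup.one_of_mem ⟨a, b, h, rfl⟩)

lemma conj_gen_eq_of_mem_st {G : SimpleGraph V} {x w : V} (hw : w ∈ st G x) :
    gen G x * gen G w * (gen G x)⁻¹ = gen G w := by
  rcases hw with rfl | hadj
  · group
  · rw [gen_mul_comm_of_adj hadj, mul_inv_cancel_right]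

def RAAG.lift_s4 {G : SimpleGraph V} {H : Type*} [Group H] (f : V → H)
    (hf : ∀ a b, G.Adj a b → Commute (f a) (f b)) : RAAG G →* H :=
  PresentedGroup.toGroup (f := f) <| by
    rintro _ ⟨a, b, hab, rfl⟩
    simp [commutatorElement_def, (hf a b hab).eq, mul_inv_cancel_right]

@[simp]
lemma RAAG.lift_gen_s4 {G : SimpleGraph V} {H : Type*} [Group H] (f : V → H)
    (hf : ∀ a b, G.Adj a b → Commute (f a) (f b)) (v : V) :
    RAAG.lift_s4 f hf (gen G v) = f v :=
  PresentedGroup.toGroup.of (f := f) _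

lemma commute_of_adj_of_mulSupport_subset_indepSet {G : SimpleGraph V} {H : Type*} [Monoid H]
    {f : V → H} {s : Set V} (hs : G.IsIndepSet s) (hf : Function.mulSupport f ⊆ s)
    {a b : V} (hab : G.Adj a b) : Commute (f a) (f b) := by
  by_cases ha : a ∈ s
  · by_cases hb : b ∈ s
    · exact absurd hab (hs ha hb hab.ne)
    · rw [Function.notMem_mulSupport.1 (fun h => hb (hf h))]
      exact Commute.one_right _
  · rw [Function.notMem_mulSupport.1 (fun h => ha (hf h))]
    exact Commute.one_left _

lemma actsTrivially_closure_iff {A : Type*} [Group A] (φ : MulAut A) (s : Set A) :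
    ActsTrivially φ (Subgroup.closure s) ↔ ∃ g : A, ∀ a ∈ s, φ a = g * a * g⁻¹ := by
  refine ⟨fun ⟨g, hg⟩ => ⟨g, fun a ha => hg a (Subgroup.subset_closure ha)⟩, fun ⟨g, hg⟩ => ?_⟩
  exact ⟨g, fun a ha => MonoidHom.eqOn_closure (f := φ.toMonoidHom)
    (g := (MulAut.conj g).toMonoidHom) hg ha⟩

lemma actsTrivially_sp_iff {G : SimpleGraph V} (φ : MulAut (RAAG G)) (Δ : Set V) :
    ActsTrivially φ (sp G Δ) ↔ ∃ g, ∀ v ∈ Δ, φ (gen G v) = g * gen G v * g⁻¹ := by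
  simp only [sp, actsTrivially_closure_iff, Set.forall_mem_image]

lemma UnionOfComps.mem_of_adj {G : SimpleGraph V} {calG : Set (Set V)} {S K : Set V}
    (hK : UnionOfComps G calG S K) {u w : V} (hu : u ∈ K) (hw : w ∈ S) (huw : G.Adj u w) :
    w ∈ K :=
  hK.2 u hu w (.single ⟨hK.1 hu, hw, Or.inl huw⟩)

lemma not_commute_swap_zero_one_of_conj_swap_two_three (p : Equiv.Perm (Fin 4))
    (h : p * Equiv.swap 2 3 * p⁻¹ = Equiv.swap 1 2 * Equiv.swap 2 3 * (Equiv.swap 1 2)⁻¹) :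
    p * Equiv.swap 0 1 * p⁻¹ ≠ Equiv.swap 0 1 := by
  revert p
  decide

lemma conj_gen_ne_of_isIndepSet {G : SimpleGraph V} {x u v : V}
    (hxu : x ≠ u) (hxv : x ≠ v) (huv : u ≠ v) (hind : G.IsIndepSet {x, u, v}) (g : RAAG G)
    (hu : g * gen G u * g⁻¹ = gen G x * gen G u * (gen G x)⁻¹) :
    g * gen G v * g⁻¹ ≠ gen G v := by
  classical
  let f : V → Equiv.Perm (Fin 4) := fun w =>
    if w = x then Equiv.swap 1 2 else if w = u then Equiv.swap 2 3
    else if w = v then Equiv.swap 0 1 else 1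
  have hsupp : Function.mulSupport f ⊆ {x, u, v} := by
    intro w hw
    by_contra hwxuv
    simp only [Set.mem_insert_iff, Set.mem_singleton_iff, not_or] at hwxuv
    exact hw (by simp [f, hwxuv.1, hwxuv.2.1, hwxuv.2.2])
  let ψ := RAAG.lift_s4 f fun _ _ => commute_of_adj_of_mulSupport_subset_indepSet hind hsupp
  intro hv
  apply not_commute_swap_zero_one_of_conj_swap_two_three (ψ g)
  · simpa [ψ, f, hxu.symm] using congrArg ψ hu
  · simpa [ψ, f, hxv.symm, huv.symm] using congrArg ψ hv

theorem epc_acts_trivially_iff_general (G : SimpleGraph V) (x : V) (K : Set V)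
    (hK : UnionOfComps G ∅ ((st G x)ᶜ) K)
    (π : MulAut (RAAG G))
    (h1 : ∀ w ∈ K, π (gen G w) = gen G x * gen G w * (gen G x)⁻¹)
    (h2 : ∀ w ∉ K, π (gen G w) = gen G w)
    (Δ : Set V) :
    ActsTrivially π (sp G Δ) ↔ (K ∩ Δ = ∅ ∨ Δ \ st G x ⊆ K) := by
  rw [actsTrivially_sp_iff]
  constructor
  · rintro ⟨g, hg⟩
    by_contra! ⟨⟨u, huK, huΔ⟩, hsub⟩
    obtain ⟨v, ⟨hvΔ, hvst⟩, hvK⟩ := Set.not_subset.1 hsub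
    have hust : u ∉ st G x := hK.1 huK
    have hxu : ¬G.Adj x u := fun h => hust (Set.mem_insert_of_mem _ h)
    have hxv : ¬G.Adj x v := fun h => hvst (Set.mem_insert_of_mem _ h)
    have huv : ¬G.Adj u v := fun h => hvK (hK.mem_of_adj huK hvst h)
    have hind : G.IsIndepSet {x, u, v} := by
      simp [SimpleGraph.isIndepSet_iff, Set.pairwise_insert, hxu, hxv, huv, G.adj_comm]
    refine conj_gen_ne_of_isIndepSet ?_ ?_ ?_ hind g ((hg u huΔ).symm.trans (h1 u huK))
      ((hg v hvΔ).symm.trans (h2 v hvK))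
    · rintro rfl; exact hust (Set.mem_insert _ _)
    · rintro rfl; exact hvst (Set.mem_insert _ _)
    · rintro rfl; exact hvK huK
  · rintro (hKΔ | hsub)
    · exact ⟨1, fun w hw => by
        rw [h2 w fun hwK => hKΔ.subset ⟨hwK, hw⟩]; group⟩
    · refine ⟨gen G x, fun w hw => ?_⟩
      by_cases hwK : w ∈ K
      · exact h1 w hwK
      · rw [h2 w hwK, conj_gen_eq_of_mem_st (not_not.1 fun hwst => hwK (hsub ⟨hw, hwst⟩))]

/-- The extended partial conjugation `π^x_K` acts trivially on a
special subgroup `A_Δ` iff `K ∩ Δ = ∅` or `Δ - st(x) ⊆ K`. -/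
theorem epc_acts_trivially_iff [Fintype V] (G : SimpleGraph V) (x : V) (K : Set V)
    (hK : UnionOfComps G ∅ ((st G x)ᶜ) K)
    (π : MulAut (RAAG G))
    (h1 : ∀ w ∈ K, π (gen G w) = gen G x * gen G w * (gen G x)⁻¹)
    (h2 : ∀ w ∉ K, π (gen G w) = gen G w)
    (Δ : Set V) :
    ActsTrivially π (sp G Δ) ↔ (K ∩ Δ = ∅ ∨ Δ \ st G x ⊆ K) :=
  epc_acts_trivially_iff_general G x K hK π h1 h2 Δ

end RAAGPaper
end

section
/- Let Γ be a finite simple graph and define the standard order on vertices by u ≤ v iff lk(u) ⊆ st(v). If v and w are distinct vertices with v ≤ w and w ≤ v (i.e., v ∼ w), then the product ι_v (ρ_v^w)^{-1} ι_v ι_w ρ_w^v (ρ_v^w)^{-1} of inversions and transvections is the automorphism of A_Γ induced by the graph symmetry exchanging v and w and fixing all other vertices. -/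
/-! Basic definitions: right-angled Artin groups, special subgroups,
relative automorphism notions, and graph-theoretic notions from
Day–Wade, "Relative automorphism groups of right-angled Artin groups". -/

namespace RAAGPaper

open scoped commutatorElement

variable {V : Type}

theorem MulAut.inv_apply_of_apply_eq {A : Type*} [Group A] {φ : MulAut A} {a b : A}
    (h : φ a = b) : φ⁻¹ b = a :=
  h ▸ MulAut.inv_apply_self A φ a

theorem MulAut.inv_apply_of_apply_eq_mul {A : Type*} [Group A] {φ : MulAut A} {a b : A}
    (ha : φ a = a * b) (hb : φ b = b) : φ⁻¹ a = a * b⁻¹ :=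
  MulAut.inv_apply_of_apply_eq (by rw [map_mul, map_inv, ha, hb, mul_inv_cancel_right])

theorem mulAut_ext_gen {G : SimpleGraph V} {φ ψ : MulAut (RAAG G)}
    (h : ∀ u, φ (gen G u) = ψ (gen G u)) : φ = ψ :=
  MulEquiv.toMonoidHom_injective (PresentedGroup.ext h)

theorem swap_as_product_general (G : SimpleGraph V) (v w : V) (hvw : v ≠ w)
    (ιv : MulAut (RAAG G)) (hιv1 : ιv (gen G v) = (gen G v)⁻¹)
    (hιv2 : ∀ u, u ≠ v → ιv (gen G u) = gen G u)
    (ιw : MulAut (RAAG G)) (hιw1 : ιw (gen G w) = (gen G w)⁻¹)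
    (hιw2 : ∀ u, u ≠ w → ιw (gen G u) = gen G u)
    (ρvw : MulAut (RAAG G)) (hρvw1 : ρvw (gen G v) = gen G v * gen G w)
    (hρvw2 : ∀ u, u ≠ v → ρvw (gen G u) = gen G u)
    (ρwv : MulAut (RAAG G)) (hρwv1 : ρwv (gen G w) = gen G w * gen G v)
    (hρwv2 : ∀ u, u ≠ w → ρwv (gen G u) = gen G u)
    (σ : MulAut (RAAG G)) (hσ1 : σ (gen G v) = gen G w) (hσ2 : σ (gen G w) = gen G v)
    (hσ3 : ∀ u, u ≠ v → u ≠ w → σ (gen G u) = gen G u) :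
    ιv * ρvw⁻¹ * ιv * ιw * ρwv * ρvw⁻¹ = σ := by
  have hρvw_inv_v : ρvw⁻¹ (gen G v) = gen G v * (gen G w)⁻¹ :=
    MulAut.inv_apply_of_apply_eq_mul hρvw1 (hρvw2 w hvw.symm)
  have hρvw_inv : ∀ u, u ≠ v → ρvw⁻¹ (gen G u) = gen G u :=
    fun u hu => MulAut.inv_apply_of_apply_eq (hρvw2 u hu)
  refine mulAut_ext_gen fun u => ?_
  rcases eq_or_ne u v with rfl | huv
  · simp only [MulAut.mul_apply, hρvw_inv_v, map_mul, map_inv, hρvw_inv w hvw.symm, hρwv1,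
      hρwv2 u hvw, hιw1, hιw2 u hvw, hιv1, hιv2 w hvw.symm, hσ1]
    group
  rcases eq_or_ne u w with rfl | huw
  · simp only [MulAut.mul_apply, hρvw_inv u huv, hρwv1, map_mul, map_inv,
      hιw1, hιw2 v huv.symm, hιv1, hιv2 u huv, hρvw_inv_v, hσ2]
    group
  · simp only [MulAut.mul_apply, hρvw_inv u huv, hρwv2 u huw, hιw2 u huw, hιv2 u huv,
      hσ3 u huv huw]

/-- If `v ∼ w` in the standard order, then the product
`ι_v (ρ_v^w)⁻¹ ι_v ι_w ρ_w^v (ρ_v^w)⁻¹` is the automorphism induced by the graph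
symmetry exchanging `v` and `w`. -/
theorem swap_as_product [Fintype V] (G : SimpleGraph V) (v w : V) (hvw : v ≠ w)
    (h1 : stdLE G v w) (h2 : stdLE G w v)
    (ιv : MulAut (RAAG G)) (hιv1 : ιv (gen G v) = (gen G v)⁻¹)
    (hιv2 : ∀ u, u ≠ v → ιv (gen G u) = gen G u)
    (ιw : MulAut (RAAG G)) (hιw1 : ιw (gen G w) = (gen G w)⁻¹)
    (hιw2 : ∀ u, u ≠ w → ιw (gen G u) = gen G u)
    (ρvw : MulAut (RAAG G)) (hρvw1 : ρvw (gen G v) = gen G v * gen G w)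
    (hρvw2 : ∀ u, u ≠ v → ρvw (gen G u) = gen G u)
    (ρwv : MulAut (RAAG G)) (hρwv1 : ρwv (gen G w) = gen G w * gen G v)
    (hρwv2 : ∀ u, u ≠ w → ρwv (gen G u) = gen G u)
    (σ : MulAut (RAAG G)) (hσ1 : σ (gen G v) = gen G w) (hσ2 : σ (gen G w) = gen G v)
    (hσ3 : ∀ u, u ≠ v → u ≠ w → σ (gen G u) = gen G u) :
    ιv * ρvw⁻¹ * ιv * ιw * ρwv * ρvw⁻¹ = σ :=
  swap_as_product_general G v w hvw ιv hιv1 hιv2 ιw hιw1 hιw2 ρvw hρvw1 hρvw2 ρwv hρwv1 hρwv2 σ hσ1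
    hσ2 hσ3

end RAAGPaper
end

section
/- Let Γ be a finite simple graph and 𝒢 a set of proper special subgroups. Suppose Δ and Λ are full subgraphs each upwards closed under ≤_𝒢 and not 𝒢-star-separated by any outside vertex, and suppose there is a vertex v ∈ Δ ∩ Λ with st(v) ⊆ Δ ∪ Λ. Then Δ ∪ Λ is also upwards closed under ≤_𝒢 and not 𝒢-star-separated by any outside vertex. -/
/-! Basic definitions: right-angled Artin groups, special subgroups,
relative automorphism notions, and graph-theoretic notions from
Day–Wade, "Relative automorphism groups of right-angled Artin groups". -/

namespace RAAGPaper

variable {V : Type}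

open scoped commutatorElement

/-! For `x ∉ Δ ∪ Λ` we have `x ∉ st(v)`, hence `v ∉ st(x)`. Every vertex of `Δ ∪ Λ` outside
`st(x)` is then `𝒢^x`-connected to the common vertex `v`, through `Δ` or through `Λ`, so any two
of them are `𝒢^x`-connected via `v`. -/

section Union

variable {G : SimpleGraph V} {calG : Set (Set V)} {Δ Λ : Set V}

theorem mem_st_comm {v x : V} : v ∈ st G x ↔ x ∈ st G v := by
  simp only [st, lk, Set.mem_insert_iff, Set.mem_ofPred_eq, eq_comm, G.adj_comm]

theorem UpClosed.union (hΔ : UpClosed G calG Δ) (hΛ : UpClosed G calG Λ) :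
    UpClosed G calG (Δ ∪ Λ) := by
  rintro u (hu | hu) w huw
  exacts [Or.inl (hΔ u hu w huw), Or.inr (hΛ u hu w huw)]

theorem MeetsAtMostOne.union {x v : V} (hΔ : MeetsAtMostOne G calG x Δ)
    (hΛ : MeetsAtMostOne G calG x Λ) (hvΔ : v ∈ Δ) (hvΛ : v ∈ Λ) (hvx : v ∉ st G x) :
    MeetsAtMostOne G calG x (Δ ∪ Λ) := by
  intro u w hu hw hux hwx
  have reach_u_v : gReach G (calGx calG x) (st G x)ᶜ u v := by
    rcases hu with hu | hu
    exacts [hΔ u v hu hvΔ hux hvx, hΛ u v hu hvΛ hux hvx]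
  have reach_v_w : gReach G (calGx calG x) (st G x)ᶜ v w := by
    rcases hw with hw | hw
    exacts [hΔ v w hvΔ hw hvx hwx, hΛ v w hvΛ hw hvx hwx]
  exact reach_u_v.trans reach_v_w

theorem NotStarSep.union {v : V} (hΔ : NotStarSep G calG Δ) (hΛ : NotStarSep G calG Λ)
    (hvΔ : v ∈ Δ) (hvΛ : v ∈ Λ) (hst : st G v ⊆ Δ ∪ Λ) : NotStarSep G calG (Δ ∪ Λ) := by
  intro x hx
  have hvx : v ∉ st G x := fun h => hx (hst (mem_st_comm.1 h))
  exact (hΔ x fun h => hx (Or.inl h)).union (hΛ x fun h => hx (Or.inr h)) hvΔ hvΛ hvx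

end Union

theorem invariance_conditions_union_general (G : SimpleGraph V)
    (calG : Set (Set V)) (Δ Λ : Set V)
    (hΔ : UpClosed G calG Δ ∧ NotStarSep G calG Δ)
    (hΛ : UpClosed G calG Λ ∧ NotStarSep G calG Λ)
    (hv : ∃ v ∈ Δ ∩ Λ, st G v ⊆ Δ ∪ Λ) :
    UpClosed G calG (Δ ∪ Λ) ∧ NotStarSep G calG (Δ ∪ Λ) := by
  obtain ⟨v, ⟨hvΔ, hvΛ⟩, hst⟩ := hv
  exact ⟨hΔ.1.union hΛ.1, hΔ.2.union hΛ.2 hvΔ hvΛ hst⟩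

/-- If `Δ` and `Λ` satisfy the invariance conditions and share a
vertex `v` with `st(v) ⊆ Δ ∪ Λ`, then `Δ ∪ Λ` satisfies the invariance
conditions. -/
theorem invariance_conditions_union [Fintype V] (G : SimpleGraph V)
    (calG : Set (Set V)) (hprop : Proper calG) (Δ Λ : Set V)
    (hΔ : UpClosed G calG Δ ∧ NotStarSep G calG Δ)
    (hΛ : UpClosed G calG Λ ∧ NotStarSep G calG Λ)
    (hv : ∃ v ∈ Δ ∩ Λ, st G v ⊆ Δ ∪ Λ) :
    UpClosed G calG (Δ ∪ Λ) ∧ NotStarSep G calG (Δ ∪ Λ) :=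
  invariance_conditions_union_general G calG Δ Λ hΔ hΛ hv

end RAAGPaper
end

section
/- Let Γ be a finite simple graph, 𝒢 a set of proper special subgroups, A_Δ ∈ 𝒢, and Θ a 𝒢-connected subgraph of Γ − Δ. Let Λ = N_𝒢(Θ) ∩ Δ be the set of vertices of Δ that are 𝒢-adjacent to some vertex of Θ. Then Λ is upwards closed under ≤_𝒢 and is not 𝒢-star-separated by any vertex outside Λ. -/
/-! Basic definitions: right-angled Artin groups, special subgroups,
relative automorphism notions, and graph-theoretic notions from
Day–Wade, "Relative automorphism groups of right-angled Artin groups". -/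

namespace RAAGPaper

variable {V : Type}

open scoped commutatorElement

/-! Since `Λ ⊆ Δ` and `A_Δ ∈ 𝒢`, a vertex `x ∉ Δ` sees all of `Λ` inside the single member
`Δ` of `𝒢^x`. A vertex `x ∈ Δ \ Λ` is 𝒢-adjacent to no vertex of `Θ`, so `Θ` avoids `st(x)`,
every 𝒢-adjacency ending in `Θ` is already a `𝒢^x`-adjacency, and the 𝒢-connected set `Θ`
joins any two vertices of `Λ - st(x)` through `Γ - st(x)`. -/

section

variable {G : SimpleGraph V} {calG : Set (Set V)}

theorem gAdj.symm {u w : V} (h : gAdj G calG u w) : gAdj G calG w u := by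
  rcases h with h | ⟨Δ, hΔ, hu, hw⟩
  · exact Or.inl h.symm
  · exact Or.inr ⟨Δ, hΔ, hw, hu⟩

theorem gReach.symm {S : Set V} {u w : V} (h : gReach G calG S u w) : gReach G calG S w u :=
  Relation.ReflTransGen.mono (fun _ _ ⟨ha, hb, hab⟩ => ⟨hb, ha, hab.symm⟩) _ _
    (Relation.reflTransGen_swap.mpr h)

theorem gAdj_calGx_of_not_gAdj {x a b : V} (hab : gAdj G calG a b)
    (hxb : ¬ gAdj G calG x b) : gAdj G (calGx calG x) a b := by
  rcases hab with h | ⟨Δ, hΔ, ha, hb⟩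
  · exact Or.inl h
  · exact Or.inr ⟨Δ, ⟨hΔ, fun hx => hxb (Or.inr ⟨Δ, hΔ, hx, hb⟩)⟩, ha, hb⟩

theorem subset_compl_st_of_not_gAdj {x : V} {S : Set V} (hxS : x ∉ S)
    (hx : ∀ t ∈ S, ¬ gAdj G calG x t) : S ⊆ (st G x)ᶜ := by
  rintro t ht (rfl | hxt)
  · exact hxS ht
  · exact hx t ht (Or.inl hxt)

theorem gReach_calGx_compl_st_of_gReach {x a b : V} {S : Set V} (hxS : x ∉ S)
    (hx : ∀ t ∈ S, ¬ gAdj G calG x t) (h : gReach G calG S a b) :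
    gReach G (calGx calG x) (st G x)ᶜ a b :=
  have hS := subset_compl_st_of_not_gAdj hxS hx
  Relation.ReflTransGen.mono
    (fun _ c ⟨ha, hc, hac⟩ => ⟨hS ha, hS hc, gAdj_calGx_of_not_gAdj hac (hx c hc)⟩) _ _ h

theorem upClosed_neighbours {Δ Θ : Set V} (hΔ : Δ ∈ calG) (hΘΔ : Θ ⊆ Δᶜ) :
    UpClosed G calG {d ∈ Δ | ∃ t ∈ Θ, gAdj G calG d t} := by
  rintro v ⟨hvΔ, t, htΘ, hvt⟩ w ⟨hlk, hmem⟩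
  have hwΔ := hmem Δ hΔ hvΔ
  refine ⟨hwΔ, t, htΘ, ?_⟩
  rcases hvt with hvt | ⟨Δ', hΔ', hvΔ', htΔ'⟩
  · rcases hlk hvt with rfl | hwt
    · exact absurd hwΔ (hΘΔ htΘ)
    · exact Or.inl hwt
  · exact Or.inr ⟨Δ', hΔ', hmem Δ' hΔ' hvΔ', htΔ'⟩

theorem notStarSep_neighbours {Δ Θ : Set V} (hΔ : Δ ∈ calG) (hΘΔ : Θ ⊆ Δᶜ)
    (hconn : ∀ u ∈ Θ, ∀ w ∈ Θ, gReach G calG Θ u w) :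
    NotStarSep G calG {d ∈ Δ | ∃ t ∈ Θ, gAdj G calG d t} := by
  intro x hxΛ u w hu hw hux hwx
  by_cases hxΔ : x ∈ Δ
  swap
  · exact .single ⟨hux, hwx, Or.inr ⟨Δ, ⟨hΔ, hxΔ⟩, hu.1, hw.1⟩⟩
  have hxΘ : x ∉ Θ := fun hx => hΘΔ hx hxΔ
  have hxt : ∀ t ∈ Θ, ¬ gAdj G calG x t := fun t ht hxt => hxΛ ⟨hxΔ, t, ht, hxt⟩
  have hΘ := subset_compl_st_of_not_gAdj hxΘ hxt
  have reach_Θ : ∀ v ∈ {d ∈ Δ | ∃ t ∈ Θ, gAdj G calG d t}, v ∈ (st G x)ᶜ →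
      ∃ t ∈ Θ, gReach G (calGx calG x) (st G x)ᶜ v t := by
    rintro v ⟨-, t, ht, hvt⟩ hvx
    exact ⟨t, ht, .single ⟨hvx, hΘ ht, gAdj_calGx_of_not_gAdj hvt (hxt t ht)⟩⟩
  obtain ⟨tu, htu, hu_tu⟩ := reach_Θ u hu hux
  obtain ⟨tw, htw, hw_tw⟩ := reach_Θ w hw hwx
  exact (hu_tu.trans (gReach_calGx_compl_st_of_gReach hxΘ hxt (hconn tu htu tw htw))).trans
    hw_tw.symm

end

theorem neighbourhood_in_peripheral_invariant_general (G : SimpleGraph V)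
    (calG : Set (Set V)) (Δ : Set V) (hΔ : Δ ∈ calG)
    (Θ : Set V) (hΘΔ : Θ ⊆ Δᶜ)
    (hconn : ∀ u ∈ Θ, ∀ w ∈ Θ, gReach G calG Θ u w) :
    UpClosed G calG {d ∈ Δ | ∃ t ∈ Θ, gAdj G calG d t} ∧
      NotStarSep G calG {d ∈ Δ | ∃ t ∈ Θ, gAdj G calG d t} :=
  ⟨upClosed_neighbours hΔ hΘΔ, notStarSep_neighbours hΔ hΘΔ hconn⟩

/-- For `A_Δ ∈ 𝒢` and a `𝒢`-connected subgraph `Θ` of `Γ - Δ`,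
the set `Λ = N_𝒢(Θ) ∩ Δ` of vertices of `Δ` that are `𝒢`-adjacent to `Θ`
satisfies the invariance conditions. -/
theorem neighbourhood_in_peripheral_invariant [Fintype V] (G : SimpleGraph V)
    (calG : Set (Set V)) (hprop : Proper calG) (Δ : Set V) (hΔ : Δ ∈ calG)
    (Θ : Set V) (hΘΔ : Θ ⊆ Δᶜ)
    (hconn : ∀ u ∈ Θ, ∀ w ∈ Θ, gReach G calG Θ u w) :
    UpClosed G calG {d ∈ Δ | ∃ t ∈ Θ, gAdj G calG d t} ∧
      NotStarSep G calG {d ∈ Δ | ∃ t ∈ Θ, gAdj G calG d t} :=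
  neighbourhood_in_peripheral_invariant_general G calG Δ hΔ Θ hΘΔ hconn

end RAAGPaper
end

section
/- Let Γ be a finite simple graph, 𝒢 a set of proper special subgroups, A_Δ ∈ 𝒢, and x a vertex with x ∉ Δ. Then the subgraph lk(x) ∩ Δ is upwards closed under ≤_𝒢 and is not 𝒢-star-separated by any vertex outside it; hence A_{lk(x)∩Δ} is invariant under Out⁰(A_Γ; 𝒢). -/
/-! Basic definitions: right-angled Artin groups, special subgroups,
relative automorphism notions, and graph-theoretic notions from
Day–Wade, "Relative automorphism groups of right-angled Artin groups". -/

namespace RAAGPaper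

variable {V : Type}

open scoped commutatorElement

/-! Both conditions reduce to two observations. A vertex `𝒢`-above a vertex of `lk(x) ∩ Δ`
stays in `Δ` (as `A_Δ ∈ 𝒢`) and dominates a neighbour of `x`, so lies in `st(x)`, hence in
`lk(x)` since `x ∉ Δ`. A vertex `y ∉ lk(x) ∩ Δ` either lies outside `Δ`, so that `Δ` is a
single element of `𝒢^y`, or lies in `Δ ∖ lk(x)`, so that `x ∉ st(y)` and any two vertices
of `lk(x)` are joined through `x` in `Γ - st(y)`. -/

section

variable {G : SimpleGraph V} {calG : Set (Set V)}

theorem mem_st_of_mem_lk_of_stdLE {x v w : V} (hv : v ∈ lk G x) (hvw : stdLE G v w) :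
    w ∈ st G x := by
  rcases hvw (G.adj_symm hv) with rfl | hw
  · exact Set.mem_insert _ _
  · exact Set.mem_insert_of_mem _ (G.adj_symm hw)

theorem upClosed_lk_inter {Δ : Set V} (hΔ : Δ ∈ calG) {x : V} (hx : x ∉ Δ) :
    UpClosed G calG (lk G x ∩ Δ) := by
  rintro v ⟨hv, hvΔ⟩ w ⟨hvw, hmem⟩
  have hwΔ : w ∈ Δ := hmem Δ hΔ hvΔ
  rcases mem_st_of_mem_lk_of_stdLE hv hvw with rfl | hw
  · exact absurd hwΔ hx
  · exact ⟨hw, hwΔ⟩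

theorem MeetsAtMostOne.mono {y : V} {Θ Δ : Set V} (h : MeetsAtMostOne G calG y Δ)
    (hΘ : Θ ⊆ Δ) : MeetsAtMostOne G calG y Θ :=
  fun u w hu hw => h u w (hΘ hu) (hΘ hw)

theorem meetsAtMostOne_of_mem_calGx {y : V} {Δ : Set V} (hΔ : Δ ∈ calGx calG y) :
    MeetsAtMostOne G calG y Δ :=
  fun _ _ hu hw hus hws => .single ⟨hus, hws, .inr ⟨Δ, hΔ, hu, hw⟩⟩

theorem meetsAtMostOne_lk_of_notMem_st {x y : V} (hxy : x ∉ st G y) :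
    MeetsAtMostOne G calG y (lk G x) :=
  fun _ _ hu hw hus hws =>
    .head ⟨hus, hxy, .inl (G.adj_symm hu)⟩ (.single ⟨hxy, hws, .inl hw⟩)

theorem notStarSep_lk_inter {Δ : Set V} (hΔ : Δ ∈ calG) {x : V} (hx : x ∉ Δ) :
    NotStarSep G calG (lk G x ∩ Δ) := by
  intro y hy
  by_cases hyΔ : y ∈ Δ
  · have hxy : x ∉ st G y := by
      rintro (rfl | hxy)
      · exact hx hyΔ
      · exact hy ⟨G.adj_symm hxy, hyΔ⟩
    exact (meetsAtMostOne_lk_of_notMem_st hxy).mono Set.inter_subset_left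
  · exact (meetsAtMostOne_of_mem_calGx ⟨hΔ, hyΔ⟩).mono Set.inter_subset_right

end

theorem link_inter_peripheral_invariant_general (G : SimpleGraph V)
    (calG : Set (Set V)) (Δ : Set V) (hΔ : Δ ∈ calG)
    (x : V) (hx : x ∉ Δ) :
    UpClosed G calG (lk G x ∩ Δ) ∧ NotStarSep G calG (lk G x ∩ Δ) :=
  ⟨upClosed_lk_inter hΔ hx, notStarSep_lk_inter hΔ hx⟩

/-- For `A_Δ ∈ 𝒢` and a vertex `x ∉ Δ`, the subgraph
`lk(x) ∩ Δ` satisfies the invariance conditions (so `A_{lk(x)∩Δ}` is invariant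
under `Out⁰(A_Γ;𝒢)`). -/
theorem link_inter_peripheral_invariant [Fintype V] (G : SimpleGraph V)
    (calG : Set (Set V)) (hprop : Proper calG) (Δ : Set V) (hΔ : Δ ∈ calG)
    (x : V) (hx : x ∉ Δ) :
    UpClosed G calG (lk G x ∩ Δ) ∧ NotStarSep G calG (lk G x ∩ Δ) :=
  link_inter_peripheral_invariant_general G calG Δ hΔ x hx

end RAAGPaper
end

section
/- Let Γ be a finite simple graph, 𝒢 a saturated set of proper special subgroups, A_Δ ∈ 𝒢, and v ∈ Δ. Let A^Δ_{≥v} be generated by the vertices w of Δ with v ≤_Δ w (domination computed inside Δ). Then A^Δ_{≥v} is upwards closed under ≤_𝒢 and is not 𝒢-star-separated by any outside vertex; hence A^Δ_{≥v} ∈ 𝒢. -/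
/-! Basic definitions: right-angled Artin groups, special subgroups,
relative automorphism notions, and graph-theoretic notions from
Day–Wade, "Relative automorphism groups of right-angled Artin groups". -/

namespace RAAGPaper

open scoped commutatorElement

variable {V : Type}

/-! The dominators of `v` inside `Δ` form an up-set for `≤_𝒢`: domination inside `Δ` followed
by global domination onto a vertex of `Δ` is again domination inside `Δ`, and `≤_𝒢` keeps
us inside `Δ ∈ 𝒢`. For star-separation by `x ∉ S`: if `x ∉ Δ`, all of `Δ` lies in one member
of `𝒢^x`; if `x ∈ Δ`, some `c ∈ lk_Δ(v)` escapes `st(x)`, and `c` lies in the star of every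
dominator of `v`, so it is a common neighbour of everything in `S - st(x)`. Saturation then
puts `S` in `𝒢`, as `S ⊆ Δ` is proper. -/

section

variable {G : SimpleGraph V} {calG : Set (Set V)} {Δ S T : Set V} {u v w x c : V}

theorem leIn_of_leIn_of_stdLE (huv : leIn G Δ u v) (hvw : stdLE G v w) (hw : w ∈ Δ) :
    leIn G Δ u w := by
  rintro a ⟨haΔ, hua⟩
  rcases huv ⟨haΔ, hua⟩ with rfl | ⟨-, hva⟩
  · rcases hvw (show G.Adj a u from hua.symm) with rfl | huw
    · exact Or.inr ⟨haΔ, hua⟩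
    · rcases huv ⟨hw, huw.symm⟩ with rfl | ⟨-, haw⟩
      · exact Or.inl rfl
      · exact Or.inr ⟨haΔ, haw.symm⟩
  · rcases hvw hva with rfl | hwa
    · exact Or.inl rfl
    · exact Or.inr ⟨haΔ, hwa⟩

theorem upClosed_sep_leIn (hΔ : Δ ∈ calG) : UpClosed G calG {w ∈ Δ | leIn G Δ v w} :=
  fun _ ⟨huΔ, hvu⟩ _ ⟨hstd, hmem⟩ =>
    have hwΔ := hmem Δ hΔ huΔ
    ⟨hwΔ, leIn_of_leIn_of_stdLE hvu hstd hwΔ⟩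

theorem gAdj_symm (h : gAdj G calG u w) : gAdj G calG w u :=
  h.imp (fun hadj => hadj.symm) fun ⟨Θ, hΘ, huΘ, hwΘ⟩ => ⟨Θ, hΘ, hwΘ, huΘ⟩

theorem gReach_symm (h : gReach G calG S u w) : gReach G calG S w u :=
  Relation.ReflTransGen.mono (fun _ _ ⟨ha, hb, hab⟩ => ⟨hb, ha, gAdj_symm hab⟩) _ _
    (Relation.ReflTransGen.swap _ _ h)

theorem meetsAtMostOne_of_subset_mem_calGx (hT : T ⊆ Δ) (hΔ : Δ ∈ calGx calG x) :
    MeetsAtMostOne G calG x T :=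
  fun _ _ hu hw hux hwx => .single ⟨hux, hwx, Or.inr ⟨Δ, hΔ, hT hu, hT hw⟩⟩

theorem meetsAtMostOne_of_mem_st (hc : c ∉ st G x)
    (hT : ∀ y ∈ T, y ∉ st G x → c ∈ st G y) : MeetsAtMostOne G calG x T := by
  have reach : ∀ y ∈ T, y ∉ st G x → gReach G (calGx calG x) (st G x)ᶜ y c := by
    intro y hy hyx
    rcases hT y hy hyx with rfl | hyc
    · exact .refl
    · exact .single ⟨hyx, hc, Or.inl hyc⟩
  exact fun u w hu hw hux hwx => (reach u hu hux).trans (gReach_symm (reach w hw hwx))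

theorem notStarSep_sep_leIn (hΔ : Δ ∈ calG) : NotStarSep G calG {w ∈ Δ | leIn G Δ v w} := by
  intro x hx
  by_cases hxΔ : x ∈ Δ
  · obtain ⟨c, ⟨hcΔ, hvc⟩, hcx⟩ := Set.not_subset.mp fun hvx => hx ⟨hxΔ, hvx⟩
    refine meetsAtMostOne_of_mem_st (c := c) ?_ fun y ⟨_, hvy⟩ _ => ?_
    · rintro (rfl | hxc)
      exacts [hcx (Or.inl rfl), hcx (Or.inr ⟨hcΔ, hxc⟩)]
    · rcases hvy ⟨hcΔ, hvc⟩ with rfl | ⟨-, hyc⟩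
      exacts [Or.inl rfl, Or.inr hyc]
  · exact meetsAtMostOne_of_subset_mem_calGx (Set.sep_subset _ _) ⟨hΔ, hxΔ⟩

end

theorem anchored_invariance_general (G : SimpleGraph V) (calG : Set (Set V))
    (hprop : Proper calG) (hsat : Saturated G calG)
    (Δ : Set V) (hΔ : Δ ∈ calG) (v : V)
    (S : Set V) (hS : S = {w ∈ Δ | leIn G Δ v w}) :
    UpClosed G calG S ∧ NotStarSep G calG S ∧ S ∈ calG := by
  subst hS
  have hup := upClosed_sep_leIn (G := G) (v := v) hΔ
  have hsep := notStarSep_sep_leIn (G := G) (v := v) hΔ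
  have hproper : {w ∈ Δ | leIn G Δ v w} ≠ Set.univ := fun h =>
    hprop Δ hΔ (Set.eq_univ_of_univ_subset (h ▸ Set.sep_subset _ _))
  exact ⟨hup, hsep, hsat _ hproper hup hsep⟩

/-- For saturated `𝒢`, `A_Δ ∈ 𝒢`, and `v ∈ Δ`, the subgraph of
vertices of `Δ` dominating `v` inside `Δ` is upwards closed under `≤_𝒢`, not
`𝒢`-star-separated by any outside vertex, and hence lies in `𝒢`. -/
theorem anchored_invariance [Fintype V] (G : SimpleGraph V) (calG : Set (Set V))
    (hprop : Proper calG) (hsat : Saturated G calG)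
    (Δ : Set V) (hΔ : Δ ∈ calG) (v : V) (hv : v ∈ Δ)
    (S : Set V) (hS : S = {w ∈ Δ | leIn G Δ v w}) :
    UpClosed G calG S ∧ NotStarSep G calG S ∧ S ∈ calG :=
  anchored_invariance_general G calG hprop hsat Δ hΔ v S hS

end RAAGPaper
end
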